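/- Let m ≥ 5 be an integer and let c > 0. Then ∫₀^π ( c·(1 + tan²(s/2)) / (1 + c²·tan²(s/2)) )² · (sin s)^{m−1} ds ≤ π·c·(c² + 4c + 1) / (c + 1)⁴. -/

import Mathlib

/-!
Write `t = tan (s / 2)`. The tangent half-angle formulas turn the dilation
`λ² = c (1 + t²) / (1 + c² t²)` into `2 c / ((1 + c²) + (1 - c²) cos s)`, a smooth function of `s`.
Since `0 ≤ sin s ≤ 1` on `[0, π]` and `m - 1 ≥ 4`, the integral is at most `∫₀^π λ⁴ sin⁴ s ds`,
which has the closed form `6 π c² / (c + 1)⁴`: an explicit primitive is built from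
elementary terms and from the profile `α`, whose derivative is `λ²`.
Finally `6 c² ≤ c (c² + 4 c + 1)` is `c (c - 1)² ≥ 0`.
-/

open Real

lemma one_add_add_one_sub_mul_cos_pos {a : ℝ} (ha : 0 < a) (s : ℝ) :
    0 < (1 + a) + (1 - a) * cos s := by
  rcases le_total a 1 with h | h
  · nlinarith [neg_one_le_cos s]
  · nlinarith [cos_le_one s]

noncomputable def dilationSq (c s : ℝ) : ℝ := 2 * c / ((1 + c ^ 2) + (1 - c ^ 2) * cos s)

lemma continuous_dilationSq {c : ℝ} (hc : 0 < c) : Continuous (dilationSq c) :=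
  continuous_const.div (by fun_prop) fun s ↦ (one_add_add_one_sub_mul_cos_pos (pow_pos hc 2) s).ne'

lemma tan_half_eq_dilationSq (c : ℝ) {s : ℝ} (hs : cos s ≠ -1) :
    c * (1 + tan (s / 2) ^ 2) / (1 + c ^ 2 * tan (s / 2) ^ 2) = dilationSq c s := by
  rw [dilationSq, cos_eq_two_mul_tan_half_div_one_sub_tan_half_sq s hs]
  set t := tan (s / 2)
  have h1 : 0 < 1 + t ^ 2 := by positivity
  have h2 : 0 < 1 + c ^ 2 * t ^ 2 := by positivity
  have hD : (1 + c ^ 2) + (1 - c ^ 2) * ((1 - t ^ 2) / (1 + t ^ 2)) =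
      2 * (1 + c ^ 2 * t ^ 2) / (1 + t ^ 2) := by
    field_simp
    ring
  rw [hD]
  field_simp

lemma tan_half_sq_mul_sin_pow (c : ℝ) {n : ℕ} (hn : n ≠ 0) (s : ℝ) :
    (c * (1 + tan (s / 2) ^ 2) / (1 + c ^ 2 * tan (s / 2) ^ 2)) ^ 2 * sin s ^ n =
      dilationSq c s ^ 2 * sin s ^ n := by
  rcases eq_or_ne (cos s) (-1) with hs | hs
  · simp [sin_eq_zero_iff_cos_eq.2 (Or.inr hs), hn]
  · rw [tan_half_eq_dilationSq c hs]

/-- On `(-π, π)` this equals `2 arctan (c tan (s / 2))` (subtract `s / 2` and apply the tangent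
subtraction formula), but unlike that expression it is smooth on all of `ℝ`. -/
noncomputable def profile (c s : ℝ) : ℝ :=
  s + 2 * arctan ((c - 1) * sin s / ((1 + c) + (1 - c) * cos s))

@[simp] lemma profile_zero (c : ℝ) : profile c 0 = 0 := by simp [profile]

@[simp] lemma profile_pi (c : ℝ) : profile c π = π := by simp [profile]

lemma hasDerivAt_profile {c : ℝ} (hc : 0 < c) (s : ℝ) :
    HasDerivAt (profile c) (dilationSq c s) s := by
  have hDb := (one_add_add_one_sub_mul_cos_pos hc s).ne'
  have hq := ((hasDerivAt_sin s).const_mul (c - 1)).div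
    (((hasDerivAt_cos s).const_mul (1 - c)).const_add (1 + c)) hDb
  refine ((hasDerivAt_id s).add (hq.arctan.const_mul 2)).congr_deriv ?_
  have hsin := sin_sq_add_cos_sq s
  have hq_sq : 1 + ((c - 1) * sin s / ((1 + c) + (1 - c) * cos s)) ^ 2 =
      2 * ((1 + c ^ 2) + (1 - c ^ 2) * cos s) / ((1 + c) + (1 - c) * cos s) ^ 2 := by
    field_simp
    linear_combination (c - 1) ^ 2 * hsin
  have hq_num : (c - 1) * cos s * ((1 + c) + (1 - c) * cos s) - (c - 1) * sin s * ((1 - c) * -sin s)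
      = (c - 1) * ((1 + c) * cos s + (1 - c)) := by
    linear_combination (1 - c) * (c - 1) * hsin
  have hD := (one_add_add_one_sub_mul_cos_pos (pow_pos hc 2) s).ne'
  simp only [Pi.div_apply]
  rw [hq_sq, hq_num, dilationSq]
  generalize (1 + c) + (1 - c) * cos s = B at hDb ⊢
  field_simp
  ring

/-- `(c² - 1)⁴` times a primitive of `dilationSq c s ^ 2 * sin s ^ 4`; the factor clears the
denominators of the partial fraction decomposition in `cos s`. -/
noncomputable def energyPrimitive (c s : ℝ) : ℝ :=
  6 * c ^ 2 * (c ^ 4 + 6 * c ^ 2 + 1) * s - 24 * c ^ 3 * (1 + c ^ 2) * profile c s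
    + (c ^ 2 - 1) * (8 * c ^ 2 * (1 + c ^ 2) * sin s
      + 16 * c ^ 4 * (sin s / ((1 + c ^ 2) + (1 - c ^ 2) * cos s)))
    + 2 * c ^ 2 * (c ^ 2 - 1) ^ 2 * (sin s * cos s)

lemma hasDerivAt_energyPrimitive {c : ℝ} (hc : 0 < c) (s : ℝ) :
    HasDerivAt (energyPrimitive c) ((c ^ 2 - 1) ^ 4 * (dilationSq c s ^ 2 * sin s ^ 4)) s := by
  have hD := (one_add_add_one_sub_mul_cos_pos (pow_pos hc 2) s).ne'
  have hs := hasDerivAt_sin s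
  have hcs := hasDerivAt_cos s
  have hquot := hs.div ((hcs.const_mul (1 - c ^ 2)).const_add (1 + c ^ 2)) hD
  refine (((((hasDerivAt_id s).const_mul _).sub ((hasDerivAt_profile hc s).const_mul _)).add
    (((hs.const_mul _).add (hquot.const_mul _)).const_mul _)).add
    ((hs.mul hcs).const_mul _)).congr_deriv ?_
  have h2 : sin s ^ 2 = 1 - cos s ^ 2 := sin_sq s
  have h4 : sin s ^ 4 = (1 - cos s ^ 2) ^ 2 := by rw [← h2]; ring
  simp only [dilationSq]
  field_simp
  -- only even powers of `sin s` occur, so they can be traded for powers of `cos s`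
  ring_nf
  simp only [h2, h4]
  ring

lemma integral_dilationSq_sq_mul_sin_pow_four {c : ℝ} (hc : 0 < c) :
    ∫ s in (0:ℝ)..π, dilationSq c s ^ 2 * sin s ^ 4 = 6 * π * c ^ 2 / (c + 1) ^ 4 := by
  rcases eq_or_ne c 1 with rfl | hc1
  · have h := integral_sin_pow_even 2
    norm_num [Finset.prod_range_succ] at h
    norm_num [dilationSq, h]
    ring
  · have hcont : Continuous fun s ↦ dilationSq c s ^ 2 * sin s ^ 4 := by
      have := continuous_dilationSq hc
      fun_prop
    have hFTC := intervalIntegral.integral_eq_sub_of_hasDerivAt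
      (fun s _ ↦ hasDerivAt_energyPrimitive hc s) ((hcont.const_mul _).intervalIntegrable 0 π)
    rw [intervalIntegral.integral_const_mul] at hFTC
    have hd : (c ^ 2 - 1) ^ 4 ≠ 0 := pow_ne_zero _ fun h ↦ hc1 (by nlinarith)
    rw [← mul_right_inj' hd, hFTC]
    simp only [energyPrimitive, profile_pi, profile_zero, sin_pi, sin_zero, zero_div, mul_zero,
      add_zero, sub_zero]
    field_simp
    ring

lemma integral_mul_sin_pow_le_of_le {f : ℝ → ℝ} (hf : Continuous f)
    (hf0 : ∀ s ∈ Set.Icc 0 π, 0 ≤ f s) {k n : ℕ} (hkn : k ≤ n) :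
    ∫ s in (0:ℝ)..π, f s * sin s ^ n ≤ ∫ s in (0:ℝ)..π, f s * sin s ^ k := by
  refine intervalIntegral.integral_mono_on pi_pos.le
    ((hf.mul (continuous_sin.pow n)).intervalIntegrable 0 π)
    ((hf.mul (continuous_sin.pow k)).intervalIntegrable 0 π) fun s hs ↦ ?_
  exact mul_le_mul_of_nonneg_left
    (pow_le_pow_of_le_one (sin_nonneg_of_mem_Icc hs) (sin_le_one s) hkn) (hf0 s hs)

theorem stmt_14 (m : ℕ) (hm : 5 ≤ m) (c : ℝ) (hc : 0 < c) :
    ∫ s in (0:ℝ)..π,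
        (c * (1 + tan (s / 2) ^ 2) / (1 + c ^ 2 * tan (s / 2) ^ 2)) ^ 2 * sin s ^ (m - 1) ≤
      π * c * (c ^ 2 + 4 * c + 1) / (c + 1) ^ 4 := by
  simp_rw [tan_half_sq_mul_sin_pow c (n := m - 1) (by omega)]
  calc ∫ s in (0:ℝ)..π, dilationSq c s ^ 2 * sin s ^ (m - 1)
      ≤ ∫ s in (0:ℝ)..π, dilationSq c s ^ 2 * sin s ^ 4 :=
        integral_mul_sin_pow_le_of_le ((continuous_dilationSq hc).pow 2)
          (fun s _ ↦ sq_nonneg _) (by omega)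
    _ = 6 * π * c ^ 2 / (c + 1) ^ 4 := integral_dilationSq_sq_mul_sin_pow_four hc
    _ ≤ π * c * (c ^ 2 + 4 * c + 1) / (c + 1) ^ 4 := by
        refine div_le_div_of_nonneg_right ?_ (by positivity)
        nlinarith [mul_nonneg (mul_nonneg pi_pos.le hc.le) (sq_nonneg (c - 1))]
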